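/- arXiv:2110.07054 — 4 statements merged into one kernel-verified Lean document; each statement's English description precedes it below -/
import Mathlib

section
/- Let α, β, γ be real constants with α > 0, and let μ < 0. Suppose a : T² → ℝ satisfies Δa = μa with a nonzero, and define b = β∇a/(1+Λ) where Λ satisfies the relation μ = 2Λ(1+Λ)/(2(1+Λ)γ − β²) (assuming 2(1+Λ)γ − β² ≠ 0 and Λ ≠ −1). Then f̂(x,θ) = a(x) + b(x)·e(θ) satisfies L^S f̂ = λ f̂ with λ = αμ + Λ, where L^S f = ∇·[α∇f + (β/(2π))(ρ_f e(θ) − p_f) + (γ/(2π))∇ρ_f] + ∂_θ² f. -/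
open Real MeasureTheory

noncomputable def pdx (g : ℝ × ℝ → ℝ) (x : ℝ × ℝ) : ℝ := fderiv ℝ g x (1, 0)
noncomputable def pdy (g : ℝ × ℝ → ℝ) (x : ℝ × ℝ) : ℝ := fderiv ℝ g x (0, 1)
noncomputable def sgrad (g : ℝ × ℝ → ℝ) (x : ℝ × ℝ) : ℝ × ℝ := (pdx g x, pdy g x)
noncomputable def sdiv (v : ℝ × ℝ → ℝ × ℝ) (x : ℝ × ℝ) : ℝ :=
  pdx (fun y => (v y).1) x + pdy (fun y => (v y).2) x
noncomputable def lap (g : ℝ × ℝ → ℝ) (x : ℝ × ℝ) : ℝ :=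
  pdx (pdx g) x + pdy (pdy g) x




lemma contDiff_pd {g : ℝ × ℝ → ℝ} (hg : ContDiff ℝ (⊤ : ℕ∞) g) (v : ℝ × ℝ) :
    ContDiff ℝ (⊤ : ℕ∞) (fun x => fderiv ℝ g x v) :=
  (hg.fderiv_right (by simp)).clm_apply contDiff_const

lemma pd4 {g1 g2 g3 g4 : ℝ × ℝ → ℝ}
    (h1 : Differentiable ℝ g1) (h2 : Differentiable ℝ g2)
    (h3 : Differentiable ℝ g3) (h4 : Differentiable ℝ g4)
    (p1 p2 p3 p4 : ℝ) (x v : ℝ × ℝ) :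
    fderiv ℝ (fun y => p1 * g1 y + p2 * g2 y + p3 * g3 y + p4 * g4 y) x v
      = p1 * fderiv ℝ g1 x v + p2 * fderiv ℝ g2 x v + p3 * fderiv ℝ g3 x v
        + p4 * fderiv ℝ g4 x v := by
  have H : HasFDerivAt (fun y => p1 * g1 y + p2 * g2 y + p3 * g3 y + p4 * g4 y)
      (p1 • fderiv ℝ g1 x + p2 • fderiv ℝ g2 x + p3 • fderiv ℝ g3 x + p4 • fderiv ℝ g4 x) x :=
    ((((h1 x).hasFDerivAt.const_mul p1).add ((h2 x).hasFDerivAt.const_mul p2)).add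
      ((h3 x).hasFDerivAt.const_mul p3)).add ((h4 x).hasFDerivAt.const_mul p4)
  rw [H.fderiv]; simp

lemma pd_comm {g : ℝ × ℝ → ℝ} (hg : ContDiff ℝ (⊤ : ℕ∞) g) (x : ℝ × ℝ) :
    pdx (pdy g) x = pdy (pdx g) x := by
  have hd : Differentiable ℝ (fderiv ℝ g) := (hg.fderiv_right (m := (⊤ : ℕ∞)) (by simp)).differentiable (by simp)
  have h1 : ∀ v w : ℝ × ℝ, fderiv ℝ (fun y => fderiv ℝ g y v) x w
      = fderiv ℝ (fderiv ℝ g) x w v := by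
    intro v w
    rw [fderiv_clm_apply (hd x) (differentiableAt_const v)]
    simp
  rw [show pdx (pdy g) x = fderiv ℝ (fun y => fderiv ℝ g y (0,1)) x (1,0) from rfl,
    show pdy (pdx g) x = fderiv ℝ (fun y => fderiv ℝ g y (1,0)) x (0,1) from rfl,
    h1, h1, (hg.contDiffAt.isSymmSndFDerivAt (by rw [minSmoothness_of_isRCLikeNormedField]; exact WithTop.coe_le_coe.mpr le_top)) (1,0) (0,1)]

lemma d2 (k p q θ : ℝ) :
    deriv (deriv (fun t => k + p * Real.cos t + q * Real.sin t)) θ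
      = -(p * Real.cos θ) - q * Real.sin θ := by
  have h1 : deriv (fun t => k + p * Real.cos t + q * Real.sin t)
      = fun t => p * -Real.sin t + q * Real.cos t := by
    funext t
    rw [(((hasDerivAt_const t k).fun_add ((Real.hasDerivAt_cos t).const_mul p)).fun_add
      ((Real.hasDerivAt_sin t).const_mul q)).deriv]
    ring
  rw [h1, ((((Real.hasDerivAt_sin θ).fun_neg.const_mul p)).fun_add
      ((Real.hasDerivAt_cos θ).const_mul q)).deriv]
  ring

lemma int1 (A p q : ℝ) :
    (∫ θ in (0:ℝ)..(2*π), (A + p * Real.cos θ + q * Real.sin θ)) = 2*π*A := by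
  rw [intervalIntegral.integral_add
      ((continuous_const.fun_add (continuous_const.fun_mul Real.continuous_cos)).intervalIntegrable _ _)
      ((continuous_const.fun_mul Real.continuous_sin).intervalIntegrable _ _),
    intervalIntegral.integral_add
      (continuous_const.intervalIntegrable _ _)
      ((continuous_const.fun_mul Real.continuous_cos).intervalIntegrable _ _),
    intervalIntegral.integral_const_mul, intervalIntegral.integral_const_mul,
    integral_cos, integral_sin]
  simp [Real.sin_two_pi, Real.cos_two_pi]

lemma int2 (A p q : ℝ) :
    (∫ θ in (0:ℝ)..(2*π), Real.cos θ * (A + p * Real.cos θ + q * Real.sin θ)) = π * p := by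
  have h : (fun θ => Real.cos θ * (A + p * Real.cos θ + q * Real.sin θ))
      = fun θ => A * Real.cos θ + p * Real.cos θ ^ 2 + q * (Real.sin θ * Real.cos θ) := by
    funext θ; ring
  rw [intervalIntegral.integral_congr (fun θ _ => congrFun h θ)]
  rw [intervalIntegral.integral_add
      (((continuous_const.fun_mul Real.continuous_cos).fun_add
        (continuous_const.fun_mul (Real.continuous_cos.fun_pow 2))).intervalIntegrable _ _)
      ((continuous_const.fun_mul (Real.continuous_sin.fun_mul Real.continuous_cos)).intervalIntegrable _ _),
    intervalIntegral.integral_add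
      ((continuous_const.fun_mul Real.continuous_cos).intervalIntegrable _ _)
      ((continuous_const.fun_mul (Real.continuous_cos.fun_pow 2)).intervalIntegrable _ _),
    intervalIntegral.integral_const_mul, intervalIntegral.integral_const_mul,
    intervalIntegral.integral_const_mul,
    integral_cos, integral_cos_sq, integral_sin_mul_cos₁]
  simp [Real.sin_two_pi, Real.cos_two_pi]
  ring

lemma int3 (A p q : ℝ) :
    (∫ θ in (0:ℝ)..(2*π), Real.sin θ * (A + p * Real.cos θ + q * Real.sin θ)) = π * q := by
  have h : (fun θ => Real.sin θ * (A + p * Real.cos θ + q * Real.sin θ))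
      = fun θ => A * Real.sin θ + p * (Real.sin θ * Real.cos θ) + q * Real.sin θ ^ 2 := by
    funext θ; ring
  rw [intervalIntegral.integral_congr (fun θ _ => congrFun h θ)]
  rw [intervalIntegral.integral_add
      (((continuous_const.fun_mul Real.continuous_sin).fun_add
        (continuous_const.fun_mul (Real.continuous_sin.fun_mul Real.continuous_cos))).intervalIntegrable _ _)
      ((continuous_const.fun_mul (Real.continuous_sin.fun_pow 2)).intervalIntegrable _ _),
    intervalIntegral.integral_add
      ((continuous_const.fun_mul Real.continuous_sin).intervalIntegrable _ _)
      ((continuous_const.fun_mul (Real.continuous_sin.fun_mul Real.continuous_cos)).intervalIntegrable _ _),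
    intervalIntegral.integral_const_mul, intervalIntegral.integral_const_mul,
    intervalIntegral.integral_const_mul,
    integral_sin, integral_sin_sq, integral_sin_mul_cos₁]
  simp [Real.sin_two_pi, Real.cos_two_pi]
  ring

lemma pd4x {g1 g2 g3 g4 : ℝ × ℝ → ℝ}
    (h1 : Differentiable ℝ g1) (h2 : Differentiable ℝ g2)
    (h3 : Differentiable ℝ g3) (h4 : Differentiable ℝ g4)
    (p1 p2 p3 p4 : ℝ) (x : ℝ × ℝ) :
    pdx (fun y => p1 * g1 y + p2 * g2 y + p3 * g3 y + p4 * g4 y) x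
      = p1 * pdx g1 x + p2 * pdx g2 x + p3 * pdx g3 x + p4 * pdx g4 x :=
  pd4 h1 h2 h3 h4 p1 p2 p3 p4 x (1, 0)

lemma pd4y {g1 g2 g3 g4 : ℝ × ℝ → ℝ}
    (h1 : Differentiable ℝ g1) (h2 : Differentiable ℝ g2)
    (h3 : Differentiable ℝ g3) (h4 : Differentiable ℝ g4)
    (p1 p2 p3 p4 : ℝ) (x : ℝ × ℝ) :
    pdy (fun y => p1 * g1 y + p2 * g2 y + p3 * g3 y + p4 * g4 y) x
      = p1 * pdy g1 x + p2 * pdy g2 x + p3 * pdy g3 x + p4 * pdy g4 x :=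
  pd4 h1 h2 h3 h4 p1 p2 p3 p4 x (0, 1)


/-- Eigenfunctions of the symmetrized linearized operator
`L^S f = ∇·[α∇f + (β/(2π))(ρ_f e(θ) − p_f) + (γ/(2π))∇ρ_f] + ∂_θ² f`: if `Δa = μa`
with `a ≠ 0`, `μ < 0`, and `b = β∇a/(1+Λ)` where `2Λ(1+Λ) = μ(2(1+Λ)γ − β²)`, then
`f̂(x,θ) = a(x) + b(x)·e(θ)` satisfies `L^S f̂ = (αμ + Λ) f̂`. -/
theorem stmt3 (α β γ μ Λ : ℝ) (hα : 0 < α) (hμ : μ < 0)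
    (hrel : 2 * Λ * (1 + Λ) = μ * (2 * (1 + Λ) * γ - β ^ 2))
    (hden : 2 * (1 + Λ) * γ - β ^ 2 ≠ 0) (hΛ : Λ ≠ -1)
    (a : ℝ × ℝ → ℝ) (ha : ContDiff ℝ (⊤ : ℕ∞) a)
    (hax : ∀ x : ℝ × ℝ, a (x.1 + 1, x.2) = a x)
    (hay : ∀ x : ℝ × ℝ, a (x.1, x.2 + 1) = a x)
    (heig : ∀ x, lap a x = μ * a x) (ha0 : ∃ x, a x ≠ 0)
    (b : ℝ × ℝ → ℝ × ℝ) (hb : b = fun x => (β / (1 + Λ)) • sgrad a x)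
    (fhat : ℝ × ℝ → ℝ → ℝ)
    (hfhat : fhat = fun x θ => a x + (b x).1 * Real.cos θ + (b x).2 * Real.sin θ)
    (ρf : ℝ × ℝ → ℝ) (hρf : ρf = fun x => ∫ θ in (0:ℝ)..(2 * π), fhat x θ)
    (pf : ℝ × ℝ → ℝ × ℝ)
    (hpf : pf = fun x => (∫ θ in (0:ℝ)..(2 * π), Real.cos θ * fhat x θ,
                          ∫ θ in (0:ℝ)..(2 * π), Real.sin θ * fhat x θ)) :
    ∀ (x : ℝ × ℝ) (θ : ℝ),
      sdiv (fun y => α • sgrad (fun z => fhat z θ) y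
          + (β / (2 * π)) • (ρf y • (Real.cos θ, Real.sin θ) - pf y)
          + (γ / (2 * π)) • sgrad ρf y) x
        + deriv (deriv (fhat x)) θ
      = (α * μ + Λ) * fhat x θ := by
  intro x θ
  have hΛ1 : (1:ℝ) + Λ ≠ 0 := fun h => hΛ (by linarith)
  set c := β / (1 + Λ) with hc
  have hβ : β = c * (1 + Λ) := by rw [hc]; field_simp
  have hKey : μ * γ - μ * β * c / 2 = Λ := by
    rw [hc]; field_simp; nlinarith [hrel]
  -- differentiability
  have hda : Differentiable ℝ a := ha.differentiable (by simp)
  have hA1 : ContDiff ℝ (⊤ : ℕ∞) (pdx a) := contDiff_pd ha _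
  have hA2 : ContDiff ℝ (⊤ : ℕ∞) (pdy a) := contDiff_pd ha _
  have hdA1 : Differentiable ℝ (pdx a) := hA1.differentiable (by simp)
  have hdA2 : Differentiable ℝ (pdy a) := hA2.differentiable (by simp)
  have hdA11 : Differentiable ℝ (pdx (pdx a)) := (contDiff_pd hA1 _).differentiable (by simp)
  have hdA12 : Differentiable ℝ (pdx (pdy a)) := (contDiff_pd hA2 _).differentiable (by simp)
  have hdA21 : Differentiable ℝ (pdy (pdx a)) := (contDiff_pd hA1 _).differentiable (by simp)
  have hdA22 : Differentiable ℝ (pdy (pdy a)) := (contDiff_pd hA2 _).differentiable (by simp)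
  -- explicit b and fhat
  have hb' : b = fun y => (c * pdx a y, c * pdy a y) := by
    rw [hb]; funext y; simp [sgrad, Prod.smul_mk, smul_eq_mul]
  have hfhat2 : fhat = fun z t => a z + (c * pdx a z) * Real.cos t + (c * pdy a z) * Real.sin t := by
    rw [hfhat, hb']
  -- integrals
  have hρ : ρf = fun y => 2*π * a y := by
    rw [hρf, hfhat2]; funext y; exact int1 _ _ _
  have hp : pf = fun y => (π * (c * pdx a y), π * (c * pdy a y)) := by
    rw [hpf, hfhat2]; funext y; exact Prod.ext (int2 _ _ _) (int3 _ _ _)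
  simp only [hρ, hp, sdiv, sgrad, smul_sub, Prod.smul_mk, smul_eq_mul, Prod.mk_sub_mk,
    Prod.mk_add_mk, Prod.fst, Prod.snd]
  -- rewrite the two component functions into normal form
  have hfl : (fun z => fhat z θ) = fun z =>
      (1:ℝ) * a z + (c * Real.cos θ) * pdx a z + (c * Real.sin θ) * pdy a z + 0 * a z := by
    funext z; simp only [hfhat2]; ring
  have hrl : (fun y => 2 * π * a y) = fun z =>
      (2*π) * a z + (0:ℝ) * a z + 0 * a z + 0 * a z := by
    funext z; ring
  have E1 : (fun y =>
        α * pdx (fun z => fhat z θ) y + β / (2 * π) * (2 * π * a y * Real.cos θ - π * (c * pdx a y)) +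
          γ / (2 * π) * pdx (fun y => 2 * π * a y) y)
      = fun y => (β * Real.cos θ) * a y + (α + γ - β*c/2) * pdx a y
          + (α*c*Real.cos θ) * pdx (pdx a) y + (α*c*Real.sin θ) * pdx (pdy a) y := by
    funext y
    rw [hfl, hrl, pd4x hda hdA1 hdA2 hda, pd4x hda hda hda hda]
    field_simp
    ring
  have E2 : (fun y =>
        α * pdy (fun z => fhat z θ) y + β / (2 * π) * (2 * π * a y * Real.sin θ - π * (c * pdy a y)) +
          γ / (2 * π) * pdy (fun y => 2 * π * a y) y)
      = fun y => (β * Real.sin θ) * a y + (α + γ - β*c/2) * pdy a y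
          + (α*c*Real.cos θ) * pdy (pdx a) y + (α*c*Real.sin θ) * pdy (pdy a) y := by
    funext y
    rw [hfl, hrl, pd4y hda hdA1 hdA2 hda, pd4y hda hda hda hda]
    field_simp
    ring
  have E1' : (fun y => (β * Real.cos θ) * a y + (α + γ - β*c/2) * pdx a y
          + (α*c*Real.cos θ) * pdx (pdx a) y + (α*c*Real.sin θ) * pdx (pdy a) y)
      = fun y => (β * Real.cos θ) * a y + (α + γ - β*c/2) * pdx a y
          + ((α*c*Real.cos θ) * pdx (pdx a) y + (α*c*Real.sin θ) * pdx (pdy a) y) := by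
    funext y; ring
  rw [E1, E2, pd4x hda hdA1 hdA11 hdA12, pd4y hda hdA2 hdA21 hdA22]
  -- the θ-derivative term and RHS
  simp only [hfhat2]
  rw [d2]
  -- Laplacian facts
  have hcomm_a : pdx (pdy a) = pdy (pdx a) := funext (pd_comm ha)
  have hlapfun : (fun z => (1:ℝ) * pdx (pdx a) z + 1 * pdy (pdy a) z + 0 * a z + 0 * a z)
      = fun z => μ * a z + (0:ℝ) * a z + 0 * a z + 0 * a z := by
    funext z
    have h := heig z
    simp only [lap] at h
    linarith
  have hlapa : pdx (pdx a) x + pdy (pdy a) x = μ * a x := by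
    have h := heig x; simp only [lap] at h; exact h
  have hlap1 : pdx (pdx (pdx a)) x + pdy (pdy (pdx a)) x = μ * pdx a x := by
    have h1 : pdy (pdy (pdx a)) x = pdx (pdy (pdy a)) x := by
      rw [← hcomm_a, ← pd_comm hA2 x]
    rw [h1]
    have h2 : pdx (pdx (pdx a)) x + pdx (pdy (pdy a)) x
        = pdx (fun z => (1:ℝ) * pdx (pdx a) z + 1 * pdy (pdy a) z + 0 * a z + 0 * a z) x := by
      rw [pd4x hdA11 hdA22 hda hda]; ring
    rw [h2, hlapfun, pd4x hda hda hda hda]; ring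
  have hlap2 : pdx (pdx (pdy a)) x + pdy (pdy (pdy a)) x = μ * pdy a x := by
    have h1 : pdx (pdx (pdy a)) x = pdy (pdx (pdx a)) x := by
      rw [hcomm_a, pd_comm hA1 x]
    rw [h1]
    have h2 : pdy (pdx (pdx a)) x + pdy (pdy (pdy a)) x
        = pdy (fun z => (1:ℝ) * pdx (pdx a) z + 1 * pdy (pdy a) z + 0 * a z + 0 * a z) x := by
      rw [pd4y hdA11 hdA22 hda hda]; ring
    rw [h2, hlapfun, pd4y hda hda hda hda]; ring
  linear_combination (α + γ - β*c/2) * hlapa + (α*c*Real.cos θ) * hlap1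
    + (α*c*Real.sin θ) * hlap2 + (a x) * hKey
    + (pdx a x * Real.cos θ + pdy a x * Real.sin θ) * hβ
end

section
/- Let α > 0, β, γ ∈ ℝ. Suppose there exist μ ≤ −4π² and Λ ∈ ℝ with 2Λ(1+Λ) = μ(2(1+Λ)γ − β²) such that λ = αμ + Λ > 0. Then β²/2 > (α+γ)(1 − μα). Conversely, if β²/2 > (α+γ)(1 + 4π²α) then, choosing μ = −4π², there is a real solution Λ of the quadratic 2Λ(1+Λ) = μ(2(1+Λ)γ − β²) with αμ + Λ > 0. -/
open Real

/-!
Write the eigenvalue relation as `q(Λ) = 0` for the quadratic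
`q(Λ) = 2Λ(1+Λ) − μ(2(1+Λ)γ − β²)`, whose leading coefficient is positive. At `t = −αμ` it takes
the value `q(t) = μ(β² − 2(α+γ)(1 − μα))`, so for `μ < 0` the criterion reads `q(t) < 0`.
If `q(t) < 0`, the larger root exceeds `t`, which is `αμ + Λ > 0`. If instead a root `Λ > t > 0`
had `q(t) ≥ 0`, both roots would lie above `t`, hence be positive; by Vieta their sum `μγ − 1`
and their product `μ(β² − 2γ)/2` would then both be positive, which is impossible for `μ < 0`.
-/

theorem exists_root_gt_of_neg {a b c t : ℝ} (ha : 0 < a) (ht : a * t ^ 2 + b * t + c < 0) :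
    ∃ x, t < x ∧ a * x ^ 2 + b * x + c = 0 := by
  set D := b ^ 2 - 4 * a * c
  have hD : (2 * a * t + b) ^ 2 < D := by nlinarith
  have hsqrt : 2 * a * t + b < √D := lt_sqrt_of_sq_lt hD
  have hsq : √D ^ 2 = D := sq_sqrt (by nlinarith)
  refine ⟨(-b + √D) / (2 * a), by rw [lt_div_iff₀ (by positivity)]; linarith, ?_⟩
  field_simp
  linear_combination hsq

def eigenQuadratic (β γ μ Λ : ℝ) : ℝ := 2 * Λ * (1 + Λ) - μ * (2 * (1 + Λ) * γ - β ^ 2)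

section eigenQuadratic

variable {β γ μ : ℝ}

theorem eigenQuadratic_eq_zero_iff {Λ : ℝ} :
    eigenQuadratic β γ μ Λ = 0 ↔ 2 * Λ * (1 + Λ) = μ * (2 * (1 + Λ) * γ - β ^ 2) :=
  sub_eq_zero

theorem eigenQuadratic_eq_quadratic (x : ℝ) :
    eigenQuadratic β γ μ x = 2 * x ^ 2 + 2 * (1 - μ * γ) * x + μ * (β ^ 2 - 2 * γ) := by
  unfold eigenQuadratic; ring

theorem eigenQuadratic_neg_mul (α : ℝ) :
    eigenQuadratic β γ μ (-(α * μ)) = μ * (β ^ 2 - 2 * (α + γ) * (1 - μ * α)) := by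
  unfold eigenQuadratic; ring

theorem eigenQuadratic_eq_mul_of_root {Λ : ℝ} (hΛ : eigenQuadratic β γ μ Λ = 0) (x : ℝ) :
    eigenQuadratic β γ μ x = 2 * (x - Λ) * (x - (μ * γ - 1 - Λ)) := by
  unfold eigenQuadratic at *; linear_combination hΛ

theorem eigenQuadratic_neg_of_pos_of_lt_root {t Λ : ℝ} (hμ : μ < 0) (ht : 0 < t) (htΛ : t < Λ)
    (hΛ : eigenQuadratic β γ μ Λ = 0) : eigenQuadratic β γ μ t < 0 := by
  by_contra! hnonneg
  set Λ' := μ * γ - 1 - Λ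
  have ht_le : t ≤ Λ' := by
    rw [eigenQuadratic_eq_mul_of_root hΛ] at hnonneg
    nlinarith
  have hsum : 0 < μ * γ - 1 := by linarith
  have hprod : 2 * (Λ * Λ') = μ * (β ^ 2 - 2 * γ) := by
    have h0 := eigenQuadratic_eq_mul_of_root hΛ 0
    unfold eigenQuadratic at h0; linarith
  nlinarith [mul_pos (ht.trans htΛ) (ht.trans_le ht_le), sq_nonneg β]

end eigenQuadratic

/-- Algebraic instability criterion for the symmetrized linearized operators.
Forward: if there is an admissible mode `μ ≤ −4π²` and `Λ` solving the quadratic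
`2Λ(1+Λ) = μ(2(1+Λ)γ − β²)` with eigenvalue `λ = αμ + Λ > 0`, then
`β²/2 > (α+γ)(1 − μα)`. Conversely, if `β²/2 > (α+γ)(1 + 4π²α)` then the lowest mode
`μ = −4π²` admits a real solution `Λ` of the quadratic with `αμ + Λ > 0`. -/
theorem stmt5 (α β γ : ℝ) (hα : 0 < α) :
    (∀ μ Λ : ℝ, μ ≤ -4 * π ^ 2 →
        2 * Λ * (1 + Λ) = μ * (2 * (1 + Λ) * γ - β ^ 2) →
        0 < α * μ + Λ →
        β ^ 2 / 2 > (α + γ) * (1 - μ * α)) ∧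
    (β ^ 2 / 2 > (α + γ) * (1 + 4 * π ^ 2 * α) →
      ∃ Λ : ℝ, 2 * Λ * (1 + Λ) = (-4 * π ^ 2) * (2 * (1 + Λ) * γ - β ^ 2) ∧
        0 < α * (-4 * π ^ 2) + Λ) := by
  have hμ₀ : -4 * π ^ 2 < 0 := by nlinarith [pi_pos]
  constructor
  · intro μ Λ hμ hroot hpos
    have hμ : μ < 0 := hμ.trans_lt hμ₀
    have hneg := eigenQuadratic_neg_of_pos_of_lt_root (t := -(α * μ)) hμ (by nlinarith)
      (by linarith) (eigenQuadratic_eq_zero_iff.mpr hroot)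
    rw [eigenQuadratic_neg_mul] at hneg
    nlinarith
  · intro h
    have hneg : eigenQuadratic β γ (-4 * π ^ 2) (-(α * (-4 * π ^ 2))) < 0 := by
      rw [eigenQuadratic_neg_mul]
      exact mul_neg_of_neg_of_pos hμ₀ (by linarith)
    rw [eigenQuadratic_eq_quadratic] at hneg
    obtain ⟨Λ, hlt, hroot⟩ := exists_root_gt_of_neg two_pos hneg
    refine ⟨Λ, eigenQuadratic_eq_zero_iff.mp ?_, by linarith⟩
    rwa [eigenQuadratic_eq_quadratic]
end

section
/- For n ≥ 1 an integer, Pe > 0, and φ ∈ (1/2,1), the eigenvalue λ = −1 − (2πn)² + √(1 + (2πn·Pe)²(1−φ)(2φ−1)) is positive if and only if Pe²(1−φ)(2φ−1) > 2 + (2πn)². In particular, there exists an integer n ≥ 1 with λ > 0 if and only if Pe²(1−φ)(2φ−1) > 2 + 4π². -/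
open Real

/- Squaring, `(1 + a²)² < 1 + a² k`; cancelling `a² > 0` leaves `2 + a² < k`. -/
theorem neg_one_sub_sq_add_sqrt_pos_iff {a : ℝ} (ha : a ≠ 0) (k : ℝ) :
    0 < -1 - a ^ 2 + √(1 + a ^ 2 * k) ↔ 2 + a ^ 2 < k := by
  have ha2 : 0 < a ^ 2 := by positivity
  rw [show -1 - a ^ 2 + √(1 + a ^ 2 * k) = √(1 + a ^ 2 * k) - (1 + a ^ 2) by ring, sub_pos,
    Real.lt_sqrt (by positivity), show (1 + a ^ 2) ^ 2 = 1 + a ^ 2 * (2 + a ^ 2) by ring,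
    add_lt_add_iff_left, mul_lt_mul_iff_right₀ ha2]

theorem exists_nat_add_sq_mul_lt_iff {b c k : ℝ} :
    (∃ n : ℕ, 1 ≤ n ∧ b + (c * n) ^ 2 < k) ↔ b + c ^ 2 < k := by
  refine ⟨fun ⟨n, hn, h⟩ => ?_, fun h => ⟨1, le_rfl, by simpa using h⟩⟩
  have hn' : (1 : ℝ) ≤ (n : ℝ) ^ 2 := one_le_pow₀ (by exact_mod_cast hn)
  nlinarith [sq_nonneg c]

theorem stmt11_general (Pe φ : ℝ) :
    (∀ n : ℕ, 1 ≤ n →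
      (0 < -1 - (2 * π * n) ^ 2
          + Real.sqrt (1 + (2 * π * n * Pe) ^ 2 * ((1 - φ) * (2 * φ - 1))) ↔
        Pe ^ 2 * ((1 - φ) * (2 * φ - 1)) > 2 + (2 * π * n) ^ 2)) ∧
    ((∃ n : ℕ, 1 ≤ n ∧
        0 < -1 - (2 * π * n) ^ 2
          + Real.sqrt (1 + (2 * π * n * Pe) ^ 2 * ((1 - φ) * (2 * φ - 1)))) ↔
      Pe ^ 2 * ((1 - φ) * (2 * φ - 1)) > 2 + 4 * π ^ 2) := by
  have mode : ∀ n : ℕ, 1 ≤ n →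
      (0 < -1 - (2 * π * n) ^ 2
          + Real.sqrt (1 + (2 * π * n * Pe) ^ 2 * ((1 - φ) * (2 * φ - 1))) ↔
        Pe ^ 2 * ((1 - φ) * (2 * φ - 1)) > 2 + (2 * π * n) ^ 2) := fun n hn => by
    rw [mul_pow _ Pe, mul_assoc ((2 * π * n) ^ 2)]
    exact neg_one_sub_sq_add_sqrt_pos_iff (a := 2 * π * n)
      (mul_ne_zero (by positivity) (Nat.cast_ne_zero.2 (Nat.one_le_iff_ne_zero.1 hn))) _
  refine ⟨mode, ?_⟩
  rw [gt_iff_lt, show 4 * π ^ 2 = (2 * π) ^ 2 by ring, ← exists_nat_add_sq_mul_lt_iff]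
  exact exists_congr fun n => and_congr_right (mode n)

/-- Instability criterion for the full one-dimensional crowded Goldstein–Taylor
operator: for `φ ∈ (1/2,1)`, the eigenvalue
`λ = −1 − (2πn)² + √(1 + (2πnPe)²(1−φ)(2φ−1))` is positive iff
`Pe²(1−φ)(2φ−1) > 2 + (2πn)²`; some mode `n ≥ 1` is unstable iff
`Pe²(1−φ)(2φ−1) > 2 + 4π²`. -/
theorem stmt11 (Pe φ : ℝ) (hPe : 0 < Pe) (hφ : φ ∈ Set.Ioo (1/2 : ℝ) 1) :
    (∀ n : ℕ, 1 ≤ n →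
      (0 < -1 - (2 * π * n) ^ 2
          + Real.sqrt (1 + (2 * π * n * Pe) ^ 2 * ((1 - φ) * (2 * φ - 1))) ↔
        Pe ^ 2 * ((1 - φ) * (2 * φ - 1)) > 2 + (2 * π * n) ^ 2)) ∧
    ((∃ n : ℕ, 1 ≤ n ∧
        0 < -1 - (2 * π * n) ^ 2
          + Real.sqrt (1 + (2 * π * n * Pe) ^ 2 * ((1 - φ) * (2 * φ - 1)))) ↔
      Pe ^ 2 * ((1 - φ) * (2 * φ - 1)) > 2 + 4 * π ^ 2) :=
  stmt11_general Pe φ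
end

section
/- For n ≥ 1 an integer, Pe > 0, φ ∈ (0,1), the quantity λ = −1 − (2πn)² + √(1 + (nπφPe)²) is positive if and only if (nπφPe)² > (1+(2πn)²)² − 1 = (2πn)²(2 + (2πn)²), i.e., if and only if (φPe)² > 8 + 16π²n². In particular some mode n ≥ 1 is unstable (λ > 0) if and only if (φPe)² > 8(1 + 2π²). -/
open Real

lemma key (Pe φ : ℝ) (n : ℕ) (hn : 1 ≤ n) :
    0 < -1 - (2 * π * n) ^ 2 + Real.sqrt (1 + (n * π * φ * Pe) ^ 2) ↔
      (φ * Pe) ^ 2 > 8 + 16 * π ^ 2 * n ^ 2 := by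
  have hn' : (1:ℝ) ≤ (n:ℝ) := by exact_mod_cast hn
  have hc : (0:ℝ) ≤ 1 + (2 * π * n) ^ 2 := by positivity
  have hnπ : (0:ℝ) < (n:ℝ)^2 * π^2 :=
    mul_pos (pow_pos (lt_of_lt_of_le zero_lt_one hn') 2) (pow_pos Real.pi_pos 2)
  constructor
  · intro h
    have h1 : 1 + (2 * π * n) ^ 2 < Real.sqrt (1 + (n * π * φ * Pe) ^ 2) := by linarith
    have h2 : (1 + (2 * π * n) ^ 2)^2 < 1 + (n * π * φ * Pe) ^ 2 := by
      have := (Real.lt_sqrt (by positivity)).mp h1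
      linarith
    nlinarith [sq_nonneg ((φ*Pe)^2 - 8 - 16*π^2*n^2)]
  · intro h
    have h2 : (1 + (2 * π * n) ^ 2)^2 < 1 + (n * π * φ * Pe) ^ 2 := by
      nlinarith
    have h1 : 1 + (2 * π * n) ^ 2 < Real.sqrt (1 + (n * π * φ * Pe) ^ 2) :=
      (Real.lt_sqrt (by positivity)).mpr (by linarith)
    linarith

/-- Instability criterion for the symmetrized one-dimensional crowded
Goldstein–Taylor operator: `λ = −1 − (2πn)² + √(1 + (nπφPe)²) > 0` iff
`(φPe)² > 8 + 16π²n²`; some mode `n ≥ 1` is unstable iff `(φPe)² > 8(1 + 2π²)`. -/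
theorem stmt12 (Pe φ : ℝ) (hPe : 0 < Pe) (hφ : φ ∈ Set.Ioo (0:ℝ) 1) :
    (∀ n : ℕ, 1 ≤ n →
      (0 < -1 - (2 * π * n) ^ 2 + Real.sqrt (1 + (n * π * φ * Pe) ^ 2) ↔
        (φ * Pe) ^ 2 > 8 + 16 * π ^ 2 * n ^ 2)) ∧
    ((∃ n : ℕ, 1 ≤ n ∧
        0 < -1 - (2 * π * n) ^ 2 + Real.sqrt (1 + (n * π * φ * Pe) ^ 2)) ↔
      (φ * Pe) ^ 2 > 8 * (1 + 2 * π ^ 2)) := by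
  refine ⟨fun n hn => key Pe φ n hn, ?_⟩
  constructor
  · rintro ⟨n, hn, h⟩
    have := (key Pe φ n hn).mp h
    have hn' : (1:ℝ) ≤ (n:ℝ) := by exact_mod_cast hn
    have h1 : (1:ℝ) ≤ (n:ℝ)^2 := one_le_pow₀ hn'
    nlinarith [mul_le_mul_of_nonneg_left h1 (sq_nonneg π)]
  · intro h
    exact ⟨1, le_refl 1, (key Pe φ 1 le_rfl).mpr (by push_cast; nlinarith)⟩
end
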